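/- arXiv:2410.15085 — 2 statements merged into one kernel-verified Lean document; each statement's English description precedes it below -/
import Mathlib

section
/- Let G be a finite elementary abelian p-group and V a locally finite representation of G over F_p. If V is infinite-dimensional, then V^G is infinite-dimensional. -/
/-!
For `g ∈ G` the endomorphism `ρ g - 1` satisfies `(ρ g - 1) ^ p = ρ (g ^ p) - 1 = 0` in
characteristic `p`, and an endomorphism `f` of a finite-dimensional space with `f ^ n = 0` has
`dim ≤ n · dim (ker f)`. As `G` is abelian, each kernel `ker (ρ g - 1)` is again stable, so
cutting a finite-dimensional subrepresentation `W` down by these kernels one `g` at a time gives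
`dim W ≤ p ^ |G| · dim W^G`. By local finiteness, every finite linearly independent subset of `V`
lies in such a `W`, so `dim V^G < ∞` would force `dim V < ∞`.
-/

/-- A representation is locally finite if every finite subset is contained in a
finite-dimensional subrepresentation (equivalently, finitely generated
subrepresentations are finite-dimensional). -/
def Representation.IsLocallyFinite {k G V : Type*} [Field k] [Monoid G]
    [AddCommGroup V] [Module k V] (ρ : Representation k G V) : Prop :=
  ∀ s : Finset V, ∃ W : Submodule k V,
    (∀ g : G, ∀ v ∈ W, ρ g v ∈ W) ∧ (s : Set V) ⊆ (W : Set V) ∧ FiniteDimensional k W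

open Module LinearMap

section LinearAlgebra

variable {k V : Type*} [Field k] [AddCommGroup V] [Module k V]

theorem Submodule.finrank_comap_le {W : Type*} [AddCommGroup W] [Module k W]
    [FiniteDimensional k V] [FiniteDimensional k W] (f : V →ₗ[k] W) (q : Submodule k W) :
    finrank k (q.comap f) ≤ finrank k q + finrank k (ker f) := by
  have hmaps : ∀ x ∈ q.comap f, f x ∈ q := fun _ hx ↦ hx
  have hker : finrank k (ker (f.restrict hmaps)) ≤ finrank k (ker f) := by
    rw [ker_restrict, ← Submodule.finrank_map_subtype_eq, Submodule.map_comap_subtype]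
    exact Submodule.finrank_mono inf_le_right
  have := (f.restrict hmaps).finrank_range_add_finrank_ker
  have := (range (f.restrict hmaps)).finrank_le
  omega

theorem LinearMap.finrank_ker_pow_le [FiniteDimensional k V] (f : End k V) (n : ℕ) :
    finrank k (ker (f ^ n)) ≤ n * finrank k (ker f) := by
  induction n with
  | zero => simp [Module.End.one_eq_id]
  | succ n ih =>
    calc finrank k (ker (f ^ (n + 1)))
        = finrank k ((ker (f ^ n)).comap f) := by rw [pow_succ, Module.End.mul_eq_comp, ker_comp]
      _ ≤ finrank k (ker (f ^ n)) + finrank k (ker f) := Submodule.finrank_comap_le f _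
      _ ≤ (n + 1) * finrank k (ker f) := by rw [add_mul, one_mul]; gcongr

theorem Submodule.finrank_le_mul_finrank_inf_ker {f : End k V} {n : ℕ} (hf : f ^ n = 0)
    (W : Submodule k V) [FiniteDimensional k W] (hW : ∀ v ∈ W, f v ∈ W) :
    finrank k W ≤ n * finrank k ↥(W ⊓ ker f) := by
  have hpow : f.restrict hW ^ n = 0 := by
    ext x
    simp [Module.End.pow_restrict, LinearMap.restrict_apply, hf]
  have := (f.restrict hW).finrank_ker_pow_le n
  rwa [hpow, ker_zero, finrank_top, ker_restrict, ← Submodule.finrank_map_subtype_eq,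
    Submodule.map_comap_subtype] at this

theorem Submodule.finrank_le_pow_card_mul_finrank_inf_iInf_ker {ι : Type*} {f : ι → End k V}
    {n : ℕ} (hf : ∀ i, f i ^ n = 0) (hcomm : ∀ i j, Commute (f i) (f j))
    (S : Finset ι) (W : Submodule k V) [FiniteDimensional k W]
    (hW : ∀ i, ∀ v ∈ W, f i v ∈ W) :
    finrank k W ≤ n ^ S.card * finrank k ↥(W ⊓ ⨅ i ∈ S, ker (f i)) := by
  classical
  induction S using Finset.induction_on generalizing W with
  | empty =>
    have hW_inf : W ⊓ ⨅ i ∈ (∅ : Finset ι), ker (f i) = W := by simp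
    rw [hW_inf, Finset.card_empty, pow_zero, one_mul]
  | insert a S ha ih =>
    have hW' : ∀ i, ∀ v ∈ W ⊓ ker (f a), f i v ∈ W ⊓ ker (f a) := by
      intro i v hv
      obtain ⟨hvW, hva⟩ := Submodule.mem_inf.mp hv
      refine Submodule.mem_inf.mpr ⟨hW i v hvW, ?_⟩
      rw [mem_ker, ← Module.End.mul_apply, ← (hcomm i a).eq, Module.End.mul_apply,
        mem_ker.mp hva, map_zero]
    calc finrank k W ≤ n * finrank k ↥(W ⊓ ker (f a)) :=
          W.finrank_le_mul_finrank_inf_ker (hf a) (hW a)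
      _ ≤ n * (n ^ S.card * finrank k ↥(W ⊓ ker (f a) ⊓ ⨅ i ∈ S, ker (f i))) :=
          Nat.mul_le_mul_left n (ih _ hW')
      _ = n ^ (insert a S).card * finrank k ↥(W ⊓ ⨅ i ∈ insert a S, ker (f i)) := by
          rw [Finset.card_insert_of_notMem ha, Finset.iInf_insert, inf_assoc, pow_succ',
            mul_assoc]

end LinearAlgebra

namespace Representation

variable {k G V : Type*} [Field k] [AddCommGroup V] [Module k V]

theorem sub_one_pow_eq_zero [Monoid G] (ρ : Representation k G V) {p : ℕ} [ExpChar k p]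
    {g : G} (hg : g ^ p = 1) : (ρ g - 1) ^ p = 0 := by
  rcases subsingleton_or_nontrivial V with _ | _
  · exact LinearMap.ext fun _ ↦ Subsingleton.elim _ _
  · have : ExpChar (End k V) p := expChar_of_injective_algebraMap (algebraMap k _).injective p
    rw [sub_pow_expChar_of_commute p (Commute.one_right _), one_pow, ← map_pow, hg, map_one,
      sub_self]

theorem invariants_eq_iInf_ker [Group G] (ρ : Representation k G V) :
    invariants ρ = ⨅ g, ker (ρ g - 1) := by
  ext v
  simp [mem_invariants, sub_eq_zero]

theorem finrank_le_pow_card_mul_finrank_inf_invariants [CommGroup G] [Fintype G]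
    (ρ : Representation k G V) {p : ℕ} [ExpChar k p] (hG : ∀ g : G, g ^ p = 1)
    (W : Submodule k V) [FiniteDimensional k W] (hW : ∀ g, ∀ v ∈ W, ρ g v ∈ W) :
    finrank k W ≤ p ^ Fintype.card G * finrank k ↥(W ⊓ invariants ρ) := by
  have hinv : invariants ρ = ⨅ g ∈ Finset.univ, ker (ρ g - 1) := by
    simp [invariants_eq_iInf_ker]
  have hcomm : ∀ g h : G, Commute (ρ g - 1) (ρ h - 1) := fun g h ↦
    .sub_right (.sub_left (by rw [Commute, SemiconjBy, ← map_mul, ← map_mul, mul_comm])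
      (.one_left _)) (.one_right _)
  rw [hinv]
  exact W.finrank_le_pow_card_mul_finrank_inf_iInf_ker (fun g ↦ ρ.sub_one_pow_eq_zero (hG g))
    hcomm Finset.univ fun g v hv ↦ W.sub_mem (hW g v hv) hv

theorem IsLocallyFinite.finiteDimensional_of_finrank_le [Monoid G] {ρ : Representation k G V}
    (hρ : ρ.IsLocallyFinite) {C : ℕ}
    (hC : ∀ W : Submodule k V, (∀ g, ∀ v ∈ W, ρ g v ∈ W) → FiniteDimensional k W →
      finrank k W ≤ C) :
    FiniteDimensional k V := by
  refine Module.rank_lt_aleph0_iff.mp <|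
    (rank_le (n := C) fun s hs ↦ ?_).trans_lt Cardinal.natCast_lt_aleph0
  obtain ⟨W, hWinv, hsW, hWfd⟩ := hρ s
  calc s.card = finrank k (Submodule.span k (s : Set V)) := (finrank_span_finset_eq_card hs).symm
    _ ≤ finrank k W := Submodule.finrank_mono (Submodule.span_le.mpr hsW)
    _ ≤ C := hC W hWinv hWfd

end Representation

theorem stmt_3 (p : ℕ) [Fact p.Prime] (G : Type*) [CommGroup G] [Finite G]
    (hG : ∀ g : G, g ^ p = 1)
    (V : Type*) [AddCommGroup V] [Module (ZMod p) V]
    (ρ : Representation (ZMod p) G V)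
    (hlf : ρ.IsLocallyFinite)
    (hinf : ¬ FiniteDimensional (ZMod p) V) :
    ¬ FiniteDimensional (ZMod p) (Representation.invariants ρ) := by
  cases nonempty_fintype G
  intro hfin
  refine hinf <| hlf.finiteDimensional_of_finrank_le
    (C := p ^ Fintype.card G * finrank (ZMod p) (Representation.invariants ρ)) fun W hW _ ↦ ?_
  calc finrank (ZMod p) W
      ≤ p ^ Fintype.card G * finrank (ZMod p) ↥(W ⊓ Representation.invariants ρ) :=
        ρ.finrank_le_pow_card_mul_finrank_inf_invariants hG W hW
    _ ≤ p ^ Fintype.card G * finrank (ZMod p) (Representation.invariants ρ) :=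
        Nat.mul_le_mul_left _ (Submodule.finrank_mono inf_le_right)
end

section
/- Let G be an elementary abelian p-group and V a locally finite F_p-representation of G. If V is infinite-dimensional, then at least one of V^G and (V/V^G)^G is infinite-dimensional. -/
/-- The representation induced on the quotient of `V` by the subspace of invariants. -/
noncomputable def Representation.quotInvariants {k G V : Type*} [CommRing k] [Group G]
    [AddCommGroup V] [Module k V] (ρ : Representation k G V) :
    Representation k G (V ⧸ ρ.invariants) where
  toFun g := Submodule.mapQ ρ.invariants ρ.invariants (ρ g)
    (fun v hv => by
      simp only [Submodule.mem_comap]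
      rw [(Representation.mem_invariants ρ v).mp hv g]
      exact hv)
  map_one' := by
    refine LinearMap.ext fun x => ?_
    obtain ⟨v, rfl⟩ := Submodule.Quotient.mk_surjective _ x
    simp [Submodule.mapQ_apply]
  map_mul' g h := by
    refine LinearMap.ext fun x => ?_
    obtain ⟨v, rfl⟩ := Submodule.Quotient.mk_surjective _ x
    simp [Submodule.mapQ_apply]

/-!
Suppose `V^G` and `(V/V^G)^G` are finite-dimensional. Then so is
`T = {v | (g - 1) v ∈ V^G for all g}`, the second term of the filtration by iterated invariants.
The restrictions of all `g - 1` to `T` are linear combinations of those of finitely many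
`Y_i = g_i - 1`, and this forces a vector killed by every `Y_i` to lie in `T`, as soon as it lies
in some term of the filtration, which every vector does by local finiteness and the fixed-point
theorem for `p`-groups. The `Y_i` commute and `Y_i ^ p = g_i ^ p - 1 = 0`, so a fixed finite set of
monomials in the `Y_i` moves every nonzero vector to a nonzero vector killed by all `Y_i`, hence
into `T`. So `V` embeds linearly into a finite power of `T`.
-/

namespace Module.End

variable {R M : Type*} [CommRing R] [AddCommGroup M] [Module R M]

theorem exists_pow_apply_ne_zero_of_pow_eq_zero {f : Module.End R M} {N : ℕ} (hN : f ^ N = 0)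
    {v : M} (hv : v ≠ 0) : ∃ n < N, (f ^ n) v ≠ 0 ∧ f ((f ^ n) v) = 0 := by
  classical
  obtain _ | N := N
  · exact absurd (by simpa using congr($hN v)) hv
  have hex : ∃ n, (f ^ (n + 1)) v = 0 := ⟨N, by simp [hN]⟩
  refine ⟨Nat.find hex, Nat.lt_succ_of_le (Nat.find_min' hex (by simp [hN])), ?_, ?_⟩
  · cases hn : Nat.find hex with
    | zero => simpa using hv
    | succ n => exact Nat.find_min hex (by omega)
  · simpa [← Module.End.mul_apply, ← pow_succ'] using Nat.find_spec hex

theorem exists_fg_forall_exists_apply_ne_zero {ι : Type*} (Y : ι → Module.End R M)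
    (hcomm : ∀ i j, Commute (Y i) (Y j)) (hnil : ∀ i, IsNilpotent (Y i)) (s : Finset ι) :
    ∃ A : Submodule R (Module.End R M), A.FG ∧
      ∀ v ≠ 0, ∃ a ∈ A, a v ≠ 0 ∧ ∀ i ∈ s, Y i (a v) = 0 := by
  classical
  induction s using Finset.induction_on with
  | empty =>
    exact ⟨R ∙ 1, Submodule.fg_span_singleton 1,
      fun v hv => ⟨1, Submodule.mem_span_singleton_self 1, hv, by simp⟩⟩
  | insert j s _ ih =>
    obtain ⟨A, hA, hAv⟩ := ih
    obtain ⟨N, hN⟩ := hnil j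
    refine ⟨Submodule.span R (Set.range fun n : Fin N => Y j ^ (n : ℕ)) * A,
      (Submodule.fg_span (Set.finite_range _)).mul hA, fun v hv => ?_⟩
    obtain ⟨a, ha, hav, hker⟩ := hAv v hv
    obtain ⟨n, hnN, hn, hjn⟩ := exists_pow_apply_ne_zero_of_pow_eq_zero hN hav
    refine ⟨Y j ^ n * a, Submodule.mul_mem_mul (Submodule.subset_span ⟨⟨n, hnN⟩, rfl⟩) ha,
      hn, ?_⟩
    simp only [Finset.mem_insert, forall_eq_or_imp, Module.End.mul_apply]
    refine ⟨hjn, fun i hi => ?_⟩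
    rw [← Module.End.mul_apply, ((hcomm i j).pow_right n).eq, Module.End.mul_apply,
      hker i hi, map_zero]

end Module.End

theorem FiniteDimensional.of_forall_ne_zero_exists_apply_mem {K V : Type*} [Field K]
    [AddCommGroup V] [Module K V] {A : Submodule K (Module.End K V)} (hA : A.FG)
    {T : Submodule K V} [FiniteDimensional K T] (h : ∀ v ≠ 0, ∃ a ∈ A, a v ∈ T ∧ a v ≠ 0) :
    FiniteDimensional K V := by
  have : Module.Finite K A := Module.Finite.iff_fg.mpr hA
  obtain ⟨π, hπ⟩ := T.subtype.exists_leftInverse_of_injective T.ker_subtype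
  let Φ : V →ₗ[K] A →ₗ[K] T := ((LinearMap.applyₗ (R := K)).compl₂ A.subtype).compr₂ π
  refine Module.Finite.of_injective Φ ((injective_iff_map_eq_zero Φ).mpr fun v hv => ?_)
  by_contra hv0
  obtain ⟨a, ha, haT, hav⟩ := h v hv0
  have hπa : π (a v) = ⟨a v, haT⟩ := LinearMap.congr_fun hπ ⟨a v, haT⟩
  exact hav (by simpa [Φ, hπa] using congr(($hv ⟨a, ha⟩ : V)))

theorem Submodule.exists_finset_forall_exists_mem_span_eqOn {K V ι : Type*} [Field K]
    [AddCommGroup V] [Module K V] (T : Submodule K V) [FiniteDimensional K T]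
    (f : ι → Module.End K V) (hf : ∀ i, Set.MapsTo (f i) T T) :
    ∃ s : Finset ι, ∀ i, ∃ y ∈ span K (f '' s), Set.EqOn (f i) y T := by
  classical
  let R : ι → Module.End K T := fun i => (f i).restrict (hf i)
  obtain ⟨t, ht, -, hspan, -⟩ := exists_finset_span_eq_linearIndepOn K (Set.range R)
  rw [← Set.image_univ, Finset.subset_set_image_iff] at ht
  obtain ⟨s, -, rfl⟩ := ht
  refine ⟨s, fun i => ?_⟩
  have hRi : R i ∈ span K (R '' s) := by
    rw [← Finset.coe_image, hspan]
    exact subset_span ⟨i, rfl⟩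
  have hlift : ∀ x ∈ span K (R '' s), ∃ y ∈ span K (f '' s), ∀ v : T, y v = x v := by
    intro x hx
    induction hx using span_induction with
    | mem x hx =>
      obtain ⟨j, hj, rfl⟩ := hx
      exact ⟨f j, subset_span ⟨j, hj, rfl⟩, fun v => rfl⟩
    | zero => exact ⟨0, zero_mem _, fun v => rfl⟩
    | add x x' _ _ hx hx' =>
      obtain ⟨y, hy, hyx⟩ := hx
      obtain ⟨y', hy', hyx'⟩ := hx'
      exact ⟨y + y', add_mem hy hy', fun v => by simp [hyx, hyx']⟩
    | smul c x _ hx =>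
      obtain ⟨y, hy, hyx⟩ := hx
      exact ⟨c • y, smul_mem _ c hy, fun v => by simp [hyx]⟩
  obtain ⟨y, hy, hyR⟩ := hlift (R i) hRi
  exact ⟨y, hy, fun v hv => (hyR ⟨v, hv⟩).symm⟩

namespace Representation

section Series

variable {k G V : Type*} [CommRing k] [Monoid G] [AddCommGroup V] [Module k V]
  (ρ : Representation k G V)

/-- The `n`-th term consists of the vectors killed by every product of `n` operators `ρ g - 1`. -/
def invariantsSeries : ℕ → Submodule k V
  | 0 => ⊥
  | n + 1 => ⨅ g, (invariantsSeries n).comap (ρ g - 1)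

@[simp]
theorem invariantsSeries_zero : ρ.invariantsSeries 0 = ⊥ := rfl

theorem mem_invariantsSeries_succ {n : ℕ} {v : V} :
    v ∈ ρ.invariantsSeries (n + 1) ↔ ∀ g, ρ g v - v ∈ ρ.invariantsSeries n := by
  simp [invariantsSeries]

theorem invariantsSeries_le_succ (n : ℕ) : ρ.invariantsSeries n ≤ ρ.invariantsSeries (n + 1) := by
  induction n with
  | zero => exact bot_le
  | succ n ih =>
    intro v hv
    rw [mem_invariantsSeries_succ] at hv ⊢
    exact fun g => ih (hv g)

theorem invariantsSeries_mono : Monotone ρ.invariantsSeries :=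
  monotone_nat_of_le_succ ρ.invariantsSeries_le_succ

theorem apply_mem_invariantsSeries_of_intertwines {W : Type*} [AddCommGroup W] [Module k W]
    {σ : Representation k G W} {f : W →ₗ[k] V} (hf : ∀ g, f ∘ₗ σ g = ρ g ∘ₗ f) (n : ℕ) :
    ∀ w ∈ σ.invariantsSeries n, f w ∈ ρ.invariantsSeries n := by
  induction n with
  | zero => simp
  | succ n ih =>
    intro w hw
    rw [mem_invariantsSeries_succ] at hw ⊢
    intro g
    have := ih _ (hw g)
    rwa [map_sub, ← LinearMap.comp_apply, hf g, LinearMap.comp_apply] at this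

theorem apply_mem_invariantsSeries_of_commute {κ : Module.End k V} (hκ : ∀ g, Commute κ (ρ g))
    (hκ₂ : ∀ v ∈ ρ.invariantsSeries 2, κ v = 0) (n : ℕ) :
    ∀ v ∈ ρ.invariantsSeries (n + 2), κ v ∈ ρ.invariantsSeries n := by
  induction n with
  | zero => simpa using hκ₂
  | succ n ih =>
    intro v hv
    rw [mem_invariantsSeries_succ] at hv ⊢
    intro g
    rw [← Module.End.mul_apply, ← (hκ g).eq, Module.End.mul_apply, ← map_sub]
    exact ih _ (hv g)

end Series

theorem commute_sub_one {k G V : Type*} [CommRing k] [CommMonoid G] [AddCommGroup V]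
    [Module k V] (ρ : Representation k G V) (g h : G) : Commute (ρ g - 1) (ρ h) :=
  Commute.sub_left (by simp [Commute, SemiconjBy, ← map_mul, mul_comm]) (Commute.one_left _)

/-- For every `g`, `ρ g - 1` differs from a combination of the `ρ h - 1` with `h ∈ s` by an
operator that commutes with `ρ` and vanishes on the second term, hence lowers the filtration by
two. -/
theorem exists_finset_mem_invariantsSeries_two {k G V : Type*} [Field k] [CommMonoid G]
    [AddCommGroup V] [Module k V] (ρ : Representation k G V)
    [FiniteDimensional k (ρ.invariantsSeries 2)] :
    ∃ s : Finset G, ∀ n, ∀ v ∈ ρ.invariantsSeries n, (∀ g ∈ s, ρ g v = v) →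
      v ∈ ρ.invariantsSeries 2 := by
  obtain ⟨s, hs⟩ := (ρ.invariantsSeries 2).exists_finset_forall_exists_mem_span_eqOn
    (fun g => ρ g - 1) fun g v hv =>
      ρ.invariantsSeries_le_succ 1 ((ρ.mem_invariantsSeries_succ.mp hv) g)
  refine ⟨s, fun n v hv hvs => ?_⟩
  replace hv := ρ.invariantsSeries_mono (Nat.le_add_right n 2) hv
  induction n with
  | zero => exact hv
  | succ n ih =>
    refine ih (ρ.mem_invariantsSeries_succ.mpr fun g => ?_)
    obtain ⟨y, hy, hyg⟩ := hs g
    have hyv : y v = 0 :=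
      (Submodule.span_le (p := LinearMap.ker (LinearMap.applyₗ v))).mpr
        (by rintro _ ⟨h, hh, rfl⟩; simp [hvs h hh]) hy
    have hycomm (h : G) : Commute y (ρ h) := by
      refine Submodule.span_induction (p := fun y _ => Commute y (ρ h)) ?_ (Commute.zero_left _)
        (fun _ _ _ _ => Commute.add_left) (fun c _ _ hx => hx.smul_left c) hy
      rintro _ ⟨g', -, rfl⟩
      exact ρ.commute_sub_one g' h
    have := ρ.apply_mem_invariantsSeries_of_commute
      (fun h => (ρ.commute_sub_one g h).sub_left (hycomm h))
      (fun t ht => sub_eq_zero.mpr (hyg ht)) (n + 1) v hv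
    simpa [hyv] using this

section Group

variable {k G V : Type*} [CommRing k] [Group G] [AddCommGroup V] [Module k V]
  (ρ : Representation k G V)

theorem invariantsSeries_one : ρ.invariantsSeries 1 = ρ.invariants := by
  ext v
  simp [mem_invariantsSeries_succ, mem_invariants, sub_eq_zero]

theorem comap_mkQ_invariantsSeries_quotInvariants (n : ℕ) :
    (ρ.quotInvariants.invariantsSeries n).comap ρ.invariants.mkQ =
      ρ.invariantsSeries (n + 1) := by
  induction n with
  | zero => simp [invariantsSeries_one]
  | succ n ih =>
    ext v
    rw [Submodule.mem_comap, mem_invariantsSeries_succ, mem_invariantsSeries_succ, ← ih]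
    rfl

end Group

theorem finiteDimensional_invariantsSeries_two {k G V : Type*} [Field k] [Group G]
    [AddCommGroup V] [Module k V] (ρ : Representation k G V)
    [FiniteDimensional k ρ.invariants] [FiniteDimensional k ρ.quotInvariants.invariants] :
    FiniteDimensional k (ρ.invariantsSeries 2) := by
  rw [← comap_mkQ_invariantsSeries_quotInvariants, invariantsSeries_one]
  refine Module.Finite.iff_fg.mpr (Submodule.fg_of_fg_map_of_fg_inf_ker ρ.invariants.mkQ ?_ ?_)
  · exact Module.Finite.iff_fg.mp (Submodule.finiteDimensional_of_le (Submodule.map_comap_le _ _))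
  · rw [Submodule.ker_mkQ]
    exact Module.Finite.iff_fg.mp (Submodule.finiteDimensional_of_le inf_le_right)

section PGroup

variable {p : ℕ} [Fact p.Prime] {G : Type*} [Group G]

theorem invariants_ne_bot (hG : IsPGroup p G) {V : Type*} [AddCommGroup V]
    [Module (ZMod p) V] [Finite V] [Nontrivial V] (ρ : Representation (ZMod p) G V) :
    ρ.invariants ≠ ⊥ := by
  let : MulAction G V := MulAction.compHom V ρ
  have : Module.Finite (ZMod p) V := Module.Finite.of_finite
  have hp : p ∣ Nat.card V := by
    rw [Module.natCard_eq_pow_finrank (K := ZMod p), Nat.card_zmod]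
    exact dvd_pow_self p Module.finrank_pos.ne'
  obtain ⟨v, hv, hv0⟩ :=
    hG.exists_fixed_point_of_prime_dvd_card_of_fixed_point V hp (a := 0) fun g => map_zero (ρ g)
  exact (Submodule.ne_bot_iff _).mpr ⟨v, hv, hv0.symm⟩

theorem exists_invariantsSeries_eq_top (hG : IsPGroup p G) {V : Type*} [AddCommGroup V]
    [Module (ZMod p) V] [FiniteDimensional (ZMod p) V] (ρ : Representation (ZMod p) G V) :
    ∃ n, ρ.invariantsSeries n = ⊤ := by
  induction hd : Module.finrank (ZMod p) V using Nat.strong_induction_on generalizing V with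
  | _ d ih =>
  rcases subsingleton_or_nontrivial V with hV | hV
  · exact ⟨0, Subsingleton.elim _ _⟩
  have : Finite V := Module.finite_of_finite (ZMod p)
  have hlt : Module.finrank (ZMod p) (V ⧸ ρ.invariants) < d := by
    have := Submodule.finrank_quotient_add_finrank ρ.invariants
    have := Submodule.finrank_eq_zero.not.mpr (ρ.invariants_ne_bot hG)
    omega
  obtain ⟨n, hn⟩ := ih _ hlt ρ.quotInvariants rfl
  exact ⟨n + 1, by rw [← comap_mkQ_invariantsSeries_quotInvariants, hn, Submodule.comap_top]⟩

theorem IsLocallyFinite.exists_mem_invariantsSeries (hG : IsPGroup p G) {V : Type*}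
    [AddCommGroup V] [Module (ZMod p) V] {ρ : Representation (ZMod p) G V}
    (hρ : ρ.IsLocallyFinite) (v : V) : ∃ n, v ∈ ρ.invariantsSeries n := by
  obtain ⟨W, hW, hvW, _⟩ := hρ {v}
  let σ : Subrepresentation ρ := ⟨W, fun g _ hw => hW g _ hw⟩
  obtain ⟨n, hn⟩ := exists_invariantsSeries_eq_top hG σ.toRepresentation
  exact ⟨n, ρ.apply_mem_invariantsSeries_of_intertwines (f := W.subtype) (fun g => rfl) n
    ⟨v, hvW (by simp)⟩ (hn ▸ Submodule.mem_top)⟩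

theorem isNilpotent_sub_one {k V : Type*} [Field k] [CharP k p] [AddCommGroup V] [Module k V]
    (ρ : Representation k G V) {g : G} (hg : g ^ p = 1) : IsNilpotent (ρ g - 1) := by
  rcases subsingleton_or_nontrivial V with hV | hV
  · exact ⟨1, Subsingleton.elim _ _⟩
  have : CharP (Module.End k V) p :=
    charP_of_injective_algebraMap (algebraMap k _).injective p
  exact ⟨p, by rw [sub_pow_char_of_commute (p := p) (Commute.one_right _), ← map_pow, hg,
    map_one, one_pow, sub_self]⟩

end PGroup

end Representation

theorem stmt_5 (p : ℕ) [Fact p.Prime] (G : Type*) [CommGroup G]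
    (hG : ∀ g : G, g ^ p = 1)
    (V : Type*) [AddCommGroup V] [Module (ZMod p) V]
    (ρ : Representation (ZMod p) G V)
    (hlf : ρ.IsLocallyFinite)
    (hinf : ¬ FiniteDimensional (ZMod p) V) :
    ¬ FiniteDimensional (ZMod p) (Representation.invariants ρ) ∨
      ¬ FiniteDimensional (ZMod p) (Representation.invariants ρ.quotInvariants) := by
  by_contra! ⟨_, _⟩
  refine hinf ?_
  have hpG : IsPGroup p G := fun g => ⟨1, by rw [pow_one, hG g]⟩
  have := ρ.finiteDimensional_invariantsSeries_two
  obtain ⟨s, hs⟩ := ρ.exists_finset_mem_invariantsSeries_two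
  obtain ⟨A, hA, hAv⟩ := Module.End.exists_fg_forall_exists_apply_ne_zero (fun g => ρ g - 1)
    (fun g h => (ρ.commute_sub_one g h).sub_right (Commute.one_right _))
    (fun g => ρ.isNilpotent_sub_one (hG g)) s
  refine FiniteDimensional.of_forall_ne_zero_exists_apply_mem hA (T := ρ.invariantsSeries 2)
    fun v hv => ?_
  obtain ⟨a, ha, hav, hker⟩ := hAv v hv
  obtain ⟨n, hn⟩ := hlf.exists_mem_invariantsSeries hpG (a v)
  exact ⟨a, ha, hs n _ hn fun g hg => sub_eq_zero.mp (hker g hg), hav⟩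
end
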